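/- arXiv:1306.6104 — 2 statements merged into one kernel-verified Lean document; each statement's English description precedes it below -/
import Mathlib

section
/- Let (c_r) be a sequence of positive reals with Σ_r c_r < ∞, and let μ_r be probability measures on a measurable space such that for every measurable set E and every r, e^{-c_r} ≤ μ_r(E)/μ_{r+1}(E) ≤ e^{c_r} whenever μ_{r+1}(E) > 0. Then for each measurable E the limit μ(E) := lim_{r→∞} μ_r(E) exists, and moreover e^{-Σ_{s≥r} c_s} ≤ μ_r(E)/μ(E) ≤ e^{Σ_{s≥r} c_s} whenever μ(E) > 0. -/
/-!
Write `a r` for `(μ r E).toReal`. Taking logarithms turns the multiplicative closeness into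
`|log a r - log a (r + 1)| ≤ c r`, so `log a r` is Cauchy and its distance to the limit is
bounded by the tail sums of `c`; exponentiating gives the limit and the two-sided bounds.
If some `a r` vanishes, the lower bound forces all later terms to vanish, and the limit is `0`.
-/

open Filter MeasureTheory Real Set Topology

theorem div_mem_Icc_exp_iff_dist_log_le {x y c : ℝ} (hx : 0 < x) (hy : 0 < y) :
    x / y ∈ Icc (exp (-c)) (exp c) ↔ dist (log x) (log y) ≤ c := by
  rw [dist_eq, ← log_div hx.ne' hy.ne', abs_le, mem_Icc, ← le_log_iff_exp_le (div_pos hx hy),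
    ← log_le_iff_le_exp (div_pos hx hy)]

theorem exists_tendsto_div_mem_Icc_exp_tsum_of_pos {a c : ℕ → ℝ} (hc : Summable c)
    (ha : ∀ r, 0 < a r) (hstep : ∀ r, a r / a (r + 1) ∈ Icc (exp (-c r)) (exp (c r))) :
    ∃ l, Tendsto a atTop (𝓝 l) ∧
      ∀ r, a r / l ∈ Icc (exp (-∑' s, c (r + s))) (exp (∑' s, c (r + s))) := by
  have hlog : ∀ r, dist (log (a r)) (log (a (r + 1))) ≤ c r := fun r =>
    (div_mem_Icc_exp_iff_dist_log_le (ha r) (ha (r + 1))).1 (hstep r)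
  obtain ⟨L, hL⟩ := cauchySeq_tendsto_of_complete (cauchySeq_of_dist_le_of_summable c hlog hc)
  refine ⟨exp L, ?_, fun r => ?_⟩
  · simpa only [Function.comp_def, exp_log (ha _)] using (continuous_exp.tendsto L).comp hL
  · rw [div_mem_Icc_exp_iff_dist_log_le (ha r) (exp_pos L), log_exp]
    exact dist_le_tsum_of_dist_le_of_tendsto c hlog hc hL r

theorem tendsto_zero_of_eq_zero_of_succ_eq_zero {a : ℕ → ℝ}
    (hzero : ∀ r, a r = 0 → a (r + 1) = 0) {m : ℕ} (hm : a m = 0) : Tendsto a atTop (𝓝 0) :=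
  tendsto_atTop_of_eventually_const fun n hn => Nat.le_induction hm (fun n _ => hzero n) n hn

theorem exists_tendsto_div_mem_Icc_exp_tsum {a c : ℕ → ℝ} (hc : Summable c) (ha : ∀ r, 0 ≤ a r)
    (hstep : ∀ r, 0 < a (r + 1) → a r / a (r + 1) ∈ Icc (exp (-c r)) (exp (c r))) :
    ∃ l, Tendsto a atTop (𝓝 l) ∧
      (0 < l → ∀ r, a r / l ∈ Icc (exp (-∑' s, c (r + s))) (exp (∑' s, c (r + s)))) := by
  by_cases hpos : ∀ r, 0 < a r
  · obtain ⟨l, hl, hbound⟩ :=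
      exists_tendsto_div_mem_Icc_exp_tsum_of_pos hc hpos fun r => hstep r (hpos (r + 1))
    exact ⟨l, hl, fun _ => hbound⟩
  · obtain ⟨m, hm⟩ := not_forall.1 hpos
    have hzero : ∀ r, a r = 0 → a (r + 1) = 0 := fun r hr => by
      by_contra hne
      have hlower := (hstep r ((ha (r + 1)).lt_of_ne' hne)).1
      rw [hr, zero_div] at hlower
      exact (exp_pos _).not_ge hlower
    exact ⟨0, tendsto_zero_of_eq_zero_of_succ_eq_zero hzero ((not_lt.1 hm).antisymm (ha m)),
      fun h => (lt_irrefl 0 h).elim⟩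

theorem limit_of_multiplicatively_cauchy_measures_general
    {Ω : Type*} [MeasurableSpace Ω]
    (μ : ℕ → Measure Ω)
    (c : ℕ → ℝ) (hsum : Summable c)
    (hstep : ∀ (E : Set Ω), MeasurableSet E → ∀ r : ℕ,
      0 < ((μ (r + 1)) E).toReal →
        Real.exp (-(c r)) ≤ ((μ r) E).toReal / ((μ (r + 1)) E).toReal ∧
        ((μ r) E).toReal / ((μ (r + 1)) E).toReal ≤ Real.exp (c r)) :
    ∀ (E : Set Ω), MeasurableSet E → ∃ l : ℝ,
      Tendsto (fun r => ((μ r) E).toReal) atTop (nhds l) ∧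
      (0 < l → ∀ r : ℕ,
        Real.exp (-(∑' s : ℕ, c (r + s))) ≤ ((μ r) E).toReal / l ∧
        ((μ r) E).toReal / l ≤ Real.exp (∑' s : ℕ, c (r + s))) :=
  fun E hE => exists_tendsto_div_mem_Icc_exp_tsum (a := fun r => ((μ r) E).toReal) hsum
    (fun _ => ENNReal.toReal_nonneg) (hstep E hE)

/-- Abstract Cauchy-type argument: if consecutive probability measures are
multiplicatively `e^{±c_r}`-close with `Σ c_r < ∞`, then `μ_r(E)` converges for
every measurable `E`, with explicit two-sided tail bounds on the ratio to the limit. -/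
theorem limit_of_multiplicatively_cauchy_measures
    {Ω : Type*} [MeasurableSpace Ω]
    (μ : ℕ → Measure Ω) [∀ r, IsProbabilityMeasure (μ r)]
    (c : ℕ → ℝ) (hc : ∀ r, 0 < c r) (hsum : Summable c)
    (hstep : ∀ (E : Set Ω), MeasurableSet E → ∀ r : ℕ,
      0 < ((μ (r + 1)) E).toReal →
        Real.exp (-(c r)) ≤ ((μ r) E).toReal / ((μ (r + 1)) E).toReal ∧
        ((μ r) E).toReal / ((μ (r + 1)) E).toReal ≤ Real.exp (c r)) :
    ∀ (E : Set Ω), MeasurableSet E → ∃ l : ℝ,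
      Tendsto (fun r => ((μ r) E).toReal) atTop (nhds l) ∧
      (0 < l → ∀ r : ℕ,
        Real.exp (-(∑' s : ℕ, c (r + s))) ≤ ((μ r) E).toReal / l ∧
        ((μ r) E).toReal / l ≤ Real.exp (∑' s : ℕ, c (r + s))) :=
  limit_of_multiplicatively_cauchy_measures_general μ c hsum hstep
end

section
/- For the transfer matrix M_r of the r-range potential φ_r(x) = Σ_{k=0}^{r-1} ψ_k(x_0,x_k), the ratio distortion constant satisfies D_0 := 2 max_{b,c,c' ∈ A^r} log( (M_r^r(c,b) M_r^{r+1}(c',b)) / (M_r^{r+1}(c,b) M_r^r(c',b)) ) ≤ 12·Σ_{k=1}^{r} k‖ψ_k‖_∞, using |S_r φ_r(cb) − S_{r+1} φ_r(cb)| ≤ 3 Σ_{k=1}^r k‖ψ_k‖_∞ type bounds. -/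
/-!
The entry `M_r^r(c, b)` is the weight `exp (S_r φ_r (cb))` of the unique path of length `r`
from `c` to `b`, while `M_r^(r+1)(c, b) = ∑ₓ exp (S_(r+1) φ_r (cxb))` sums over the one free
letter `x`. Inserting `x` changes the Birkhoff sum only through the interactions `ψ_k` that
reach past the end of `c`, plus the new self-interaction `ψ_0(x, x)`, so
`|S_r φ_r (cb) - S_(r+1) φ_r (cxb) + ψ_0(x, x)| ≤ 3 ∑ k ‖ψ_k‖`. Comparing `c` with `c'` term by
term in `x`, the self-interaction cancels and the ratio is at most `exp (6 ∑ k ‖ψ_k‖)`.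
-/

open Filter MeasureTheory

/-- The `r`-range truncation `φ_r(x) = Σ_{k=0}^{r-1} ψ_k(x_0, x_k)`. -/
noncomputable def phir {A : Type*} (ψ : ℕ → A → A → ℝ) (r : ℕ) : (ℕ → A) → ℝ :=
  fun x => ∑ k ∈ Finset.range r, ψ k (x 0) (x k)

/-- Sup norm `‖ψ_k‖_∞` of the pair interaction `ψ_k`. -/
noncomputable def pairNorm {A : Type*} [Fintype A] [Nonempty A]
    (ψ : ℕ → A → A → ℝ) (k : ℕ) : ℝ :=
  ⨆ t : A × A, |ψ k t.1 t.2|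

/-- The transfer matrix `M_r(a,b) = exp(φ̃_r(a b_{r-1}))` on allowed transitions. -/
noncomputable def transferM {A : Type*} [Fintype A] [DecidableEq A]
    (ψ : ℕ → A → A → ℝ) (r : ℕ) (hr : 0 < r) :
    Matrix (Fin r → A) (Fin r → A) ℝ :=
  fun a b =>
    if ∀ i : Fin (r - 1), a ⟨(i : ℕ) + 1, by have := i.isLt; omega⟩ =
        b ⟨(i : ℕ), by have := i.isLt; omega⟩ then
      Real.exp (phir ψ r
        (fun i => if h : i < r then a ⟨i, h⟩ else b ⟨r - 1, Nat.sub_lt hr Nat.one_pos⟩))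
    else 0

namespace TransferMatrix

open Finset Function

section Words

variable {A : Type*}

def shift (u : ℕ → A) : ℕ → A := fun i => u (i + 1)

def window (r : ℕ) (u : ℕ → A) : Fin r → A := fun i => u i

def prepend {n : ℕ} (c : Fin n → A) (v : ℕ → A) : ℕ → A :=
  fun i => if h : i < n then c ⟨i, h⟩ else v (i - n)

lemma shift_iterate_apply (n : ℕ) (u : ℕ → A) (i : ℕ) : shift^[n] u i = u (i + n) := by
  induction n generalizing i with
  | zero => rfl
  | succ n ih => rw [iterate_succ_apply', shift, ih, add_right_comm, add_assoc]

lemma prepend_apply_of_lt {n : ℕ} (c : Fin n → A) (v : ℕ → A) {i : ℕ} (hi : i < n) :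
    prepend c v i = c ⟨i, hi⟩ :=
  dif_pos hi

lemma window_prepend {n : ℕ} (c : Fin n → A) (v : ℕ → A) : window n (prepend c v) = c :=
  funext fun i => prepend_apply_of_lt c v i.isLt

lemma shift_iterate_prepend {n : ℕ} (c : Fin n → A) (v : ℕ → A) :
    shift^[n] (prepend c v) = v := by
  funext i
  rw [shift_iterate_apply, prepend, dif_neg (by omega), Nat.add_sub_cancel]

lemma window_surjective [Nonempty A] (r : ℕ) : Surjective (window (A := A) r) :=
  fun b => ⟨prepend b fun _ => Classical.arbitrary A, window_prepend b _⟩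

lemma phir_congr (ψ : ℕ → A → A → ℝ) {r : ℕ} {u v : ℕ → A} (h : ∀ i < r, u i = v i) :
    phir ψ r u = phir ψ r v :=
  sum_congr rfl fun k hk => by
    rw [h 0 (by simp at hk; omega), h k (mem_range.1 hk)]

end Words

section Matrix

variable {A : Type*} [Fintype A] [DecidableEq A] (ψ : ℕ → A → A → ℝ) {r : ℕ} (hr : 0 < r)

lemma transferM_window (u : ℕ → A) :
    transferM ψ r hr (window r u) (window r (shift u)) = Real.exp (phir ψ r u) := by
  refine (if_pos fun _ => rfl).trans ?_
  exact congrArg Real.exp (phir_congr ψ fun i hi => by simp [window, hi])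

lemma eq_of_transferM_ne_zero {a b : Fin r → A} (h : transferM ψ r hr a b ≠ 0) (i : ℕ)
    (hi : i + 1 < r) : a ⟨i + 1, hi⟩ = b ⟨i, by omega⟩ := by
  by_contra hne
  exact h (if_neg fun hall => hne (hall ⟨i, by omega⟩))

lemma eq_of_transferM_pow_ne_zero {n : ℕ} {a b : Fin r → A}
    (h : (transferM ψ r hr ^ n) a b ≠ 0) (i : ℕ) (hi : i + n < r) :
    a ⟨i + n, hi⟩ = b ⟨i, by omega⟩ := by
  induction n generalizing b i with
  | zero =>
    by_contra hne
    exact h (Matrix.one_apply_ne fun hab => hne (by subst hab; rfl))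
  | succ n ih =>
    rw [pow_succ, Matrix.mul_apply] at h
    obtain ⟨d, -, hd⟩ := exists_ne_zero_of_sum_ne_zero h
    calc a ⟨i + (n + 1), hi⟩ = d ⟨i + 1, by omega⟩ :=
          (congrArg a (Fin.ext (by simp; omega))).trans
            (ih (left_ne_zero_of_mul hd) (i + 1) (by omega))
      _ = b ⟨i, by omega⟩ := eq_of_transferM_ne_zero ψ hr (right_ne_zero_of_mul hd) i (by omega)

lemma transferM_pow_window {n : ℕ} (hn : n ≤ r) (u : ℕ → A) :
    (transferM ψ r hr ^ n) (window r u) (window r (shift^[n] u)) =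
      Real.exp (birkhoffSum shift (phir ψ r) n u) := by
  induction n with
  | zero => simp
  | succ n ih =>
    rw [pow_succ, Matrix.mul_apply, sum_eq_single (window r (shift^[n] u)), ih (by omega),
      iterate_succ_apply', transferM_window, birkhoffSum_succ, Real.exp_add]
    · intro a _ ha
      by_contra hne
      refine ha (funext fun i => ?_)
      obtain ⟨_ | i, hi⟩ := i
      · rw [← eq_of_transferM_pow_ne_zero ψ hr (left_ne_zero_of_mul hne) 0 (by omega)]
        simp [window, shift_iterate_apply]
      · have := eq_of_transferM_ne_zero ψ hr (right_ne_zero_of_mul hne) i hi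
        simp only [window, shift_iterate_apply] at this ⊢
        exact this.trans (congrArg u (by omega))
    · simp

lemma transferM_pow_self_apply (c : Fin r → A) (w : ℕ → A) :
    (transferM ψ r hr ^ r) c (window r w) =
      Real.exp (birkhoffSum shift (phir ψ r) r (prepend c w)) := by
  simpa only [window_prepend, shift_iterate_prepend] using
    transferM_pow_window ψ hr le_rfl (prepend c w)

lemma transferM_pow_succ_self_apply (c : Fin r → A) (w : ℕ → A) :
    (transferM ψ r hr ^ (r + 1)) c (window r w) =
      ∑ x : A, Real.exp (birkhoffSum shift (phir ψ r) (r + 1) (prepend c (prepend ![x] w))) := by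
  rw [pow_succ, Matrix.mul_apply]
  symm
  refine Fintype.sum_of_injective (fun x => window r (prepend ![x] w)) ?_ _ _ ?_ fun x => ?_
  · intro x y hxy
    simpa [window, prepend] using congrFun hxy ⟨0, hr⟩
  · intro a ha
    by_contra hne
    refine ha ⟨a ⟨0, hr⟩, funext fun i => ?_⟩
    obtain ⟨_ | i, hi⟩ := i
    · simp [window, prepend]
    · rw [eq_of_transferM_ne_zero ψ hr (right_ne_zero_of_mul hne) i hi]
      simp [window, prepend]
  · have hw : shift (prepend ![x] w) = w := shift_iterate_prepend ![x] w
    rw [birkhoffSum_succ, Real.exp_add, shift_iterate_prepend, ← transferM_pow_self_apply,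
      ← transferM_window ψ hr, hw]

end Matrix

section Estimates

variable {A : Type*} [Fintype A] [Nonempty A] (ψ : ℕ → A → A → ℝ)

lemma abs_le_pairNorm (k : ℕ) (s t : A) : |ψ k s t| ≤ pairNorm ψ k :=
  le_ciSup (f := fun t : A × A => |ψ k t.1 t.2|) (Set.finite_range _).bddAbove (s, t)

lemma pairNorm_nonneg (k : ℕ) : 0 ≤ pairNorm ψ k :=
  (abs_nonneg _).trans (abs_le_pairNorm ψ k (Classical.arbitrary A) (Classical.arbitrary A))

lemma abs_phir_sub_le {r : ℕ} (hr : 0 < r) (v : ℕ → A) :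
    |phir ψ r v - ψ 0 (v 0) (v 0)| ≤ ∑ k ∈ Ico 1 r, pairNorm ψ k := by
  rw [phir, range_eq_Ico, sum_eq_sum_Ico_succ_bot hr, add_sub_cancel_left]
  exact (abs_sum_le_sum_abs _ _).trans (sum_le_sum fun k _ => abs_le_pairNorm ψ k _ _)

lemma abs_birkhoffSum_phir_sub_le {m r : ℕ} {u v : ℕ → A} (h : ∀ i < m, u i = v i) :
    |birkhoffSum shift (phir ψ r) m u - birkhoffSum shift (phir ψ r) m v| ≤
      2 * ∑ k ∈ range r, k * pairNorm ψ k := by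
  set t : ℕ → ℕ → ℝ := fun j k => ψ k (u j) (u (k + j)) - ψ k (v j) (v (k + j))
  have hsum : birkhoffSum shift (phir ψ r) m u - birkhoffSum shift (phir ψ r) m v =
      ∑ k ∈ range r, ∑ j ∈ range m, t j k := by
    rw [birkhoffSum, birkhoffSum, ← sum_sub_distrib, sum_comm]
    refine sum_congr rfl fun j _ => ?_
    simp only [phir, shift_iterate_apply, zero_add, ← sum_sub_distrib, t]
  have ht : ∀ j k, |t j k| ≤ 2 * pairNorm ψ k := fun j k => (abs_sub _ _).trans (by
    linarith [abs_le_pairNorm ψ k (u j) (u (k + j)), abs_le_pairNorm ψ k (v j) (v (k + j))])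
  -- The `(j, k)` term vanishes when `j + k < m`, which leaves at most `k` values of `j`.
  have hk : ∀ k, ∑ j ∈ range m, |t j k| ≤ k * (2 * pairNorm ψ k) := by
    intro k
    rw [← sum_range_add_sum_Ico _ (Nat.sub_le m k), sum_eq_zero fun j hj => ?_, zero_add]
    · calc ∑ j ∈ Ico (m - k) m, |t j k| ≤ #(Ico (m - k) m) • (2 * pairNorm ψ k) :=
            sum_le_card_nsmul _ _ _ fun j _ => ht j k
        _ ≤ k * (2 * pairNorm ψ k) := by
            rw [nsmul_eq_mul, Nat.card_Ico]
            gcongr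
            · linarith [pairNorm_nonneg ψ k]
            · omega
    · have hjk : j + k < m := by simp at hj; omega
      simp [t, h j (by omega), h (k + j) (by omega)]
  calc _ = |∑ k ∈ range r, ∑ j ∈ range m, t j k| := by rw [hsum]
    _ ≤ ∑ k ∈ range r, ∑ j ∈ range m, |t j k| :=
        (abs_sum_le_sum_abs _ _).trans (sum_le_sum fun k _ => abs_sum_le_sum_abs _ _)
    _ ≤ ∑ k ∈ range r, k * (2 * pairNorm ψ k) := sum_le_sum fun k _ => hk k
    _ = 2 * ∑ k ∈ range r, k * pairNorm ψ k := by
        rw [mul_sum]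
        exact sum_congr rfl fun k _ => by ring

lemma sum_range_mul_pairNorm_le (r : ℕ) :
    ∑ k ∈ range r, k * pairNorm ψ k ≤ ∑ k ∈ Icc 1 r, k * pairNorm ψ k :=
  calc ∑ k ∈ range r, k * pairNorm ψ k ≤ ∑ k ∈ range (r + 1), k * pairNorm ψ k :=
        sum_le_sum_of_subset_of_nonneg (range_subset_range.2 r.le_succ) fun k _ _ =>
          mul_nonneg k.cast_nonneg (pairNorm_nonneg ψ k)
    _ = ∑ k ∈ Icc 1 r, k * pairNorm ψ k := by
        rw [range_eq_Ico, sum_eq_sum_Ico_succ_bot (Nat.zero_lt_succ r)]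
        simp [Ico_add_one_right_eq_Icc]

lemma sum_Ico_pairNorm_le (r : ℕ) :
    ∑ k ∈ Ico 1 r, pairNorm ψ k ≤ ∑ k ∈ Icc 1 r, k * pairNorm ψ k :=
  calc ∑ k ∈ Ico 1 r, pairNorm ψ k ≤ ∑ k ∈ Ico 1 r, k * pairNorm ψ k :=
        sum_le_sum fun k hk => le_mul_of_one_le_left (pairNorm_nonneg ψ k)
          (by exact_mod_cast (mem_Ico.1 hk).1)
    _ ≤ ∑ k ∈ Icc 1 r, k * pairNorm ψ k :=
        sum_le_sum_of_subset_of_nonneg Ico_subset_Icc_self fun k _ _ =>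
          mul_nonneg k.cast_nonneg (pairNorm_nonneg ψ k)

lemma abs_birkhoffSum_prepend_sub_le {r : ℕ} (hr : 0 < r) (c : Fin r → A) (w : ℕ → A) (x : A) :
    |birkhoffSum shift (phir ψ r) r (prepend c w) -
        birkhoffSum shift (phir ψ r) (r + 1) (prepend c (prepend ![x] w)) + ψ 0 x x| ≤
      3 * ∑ k ∈ Icc 1 r, k * pairNorm ψ k := by
  have hcw := abs_birkhoffSum_phir_sub_le ψ (r := r)
    (fun i hi => by simp [prepend, hi] : ∀ i < r, prepend c w i = prepend c (prepend ![x] w) i)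
  have hx := abs_phir_sub_le ψ hr (prepend ![x] w)
  have h0 : prepend ![x] w 0 = x := rfl
  rw [h0] at hx
  have hrange := sum_range_mul_pairNorm_le ψ r
  have hIco := sum_Ico_pairNorm_le ψ r
  rw [birkhoffSum_succ, shift_iterate_prepend, abs_le]
  rw [abs_le] at hcw hx
  constructor <;> linarith

end Estimates

lemma log_div_le_of_forall_add_le {ι : Type*} [Fintype ι] [Nonempty ι] {a a' C : ℝ}
    {s s' : ι → ℝ} (h : ∀ i, a + s' i ≤ C + s i + a') :
    Real.log ((Real.exp a * ∑ i, Real.exp (s' i)) / ((∑ i, Real.exp (s i)) * Real.exp a')) ≤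
      C := by
  rw [Real.log_le_iff_le_exp (by positivity), div_le_iff₀ (by positivity), mul_sum, sum_mul,
    mul_sum]
  refine sum_le_sum fun i _ => ?_
  simp only [← Real.exp_add]
  exact Real.exp_le_exp.2 (by linarith [h i])

end TransferMatrix

open TransferMatrix

/-- The ratio-distortion constant
`D₀ = 2 max_{b,c,c'} log (M_r^r(c,b) M_r^{r+1}(c',b) / (M_r^{r+1}(c,b) M_r^r(c',b)))`
is bounded by `12 Σ_{k=1}^r k‖ψ_k‖`. -/
theorem distortion_constant_bound {A : Type*} [Fintype A] [DecidableEq A] [Nonempty A]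
    (ψ : ℕ → A → A → ℝ) (r : ℕ) (hr : 0 < r) :
    2 * (⨆ t : (Fin r → A) × (Fin r → A) × (Fin r → A),
        Real.log ((((transferM ψ r hr) ^ r) t.2.1 t.1 *
            ((transferM ψ r hr) ^ (r + 1)) t.2.2 t.1) /
          ((((transferM ψ r hr) ^ (r + 1)) t.2.1 t.1) *
            ((transferM ψ r hr) ^ r) t.2.2 t.1))) ≤
      12 * ∑ k ∈ Finset.Icc 1 r, (k : ℝ) * pairNorm ψ k := by
  rw [show (12 : ℝ) = 2 * (3 + 3) by norm_num, mul_assoc]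
  gcongr
  refine ciSup_le ?_
  rintro ⟨b, c, c'⟩
  obtain ⟨w, rfl⟩ := window_surjective r b
  simp only [transferM_pow_self_apply, transferM_pow_succ_self_apply]
  refine log_div_le_of_forall_add_le fun x => ?_
  have hc := abs_le.1 (abs_birkhoffSum_prepend_sub_le ψ hr c w x)
  have hc' := abs_le.1 (abs_birkhoffSum_prepend_sub_le ψ hr c' w x)
  linarith [hc.1, hc'.2]
end
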